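/- Fix λ ∈ ℝ and define the super-dilatation operators D_n = e^{inφ}(r∂_r + ½) for n ∈ ℤ, acting on smooth complex-valued functions on H. Then for all n, m ∈ ℤ: (i) L_n(D_m f) − D_m(L_n f) = −m D_{n+m} f for every smooth f; (ii) D_n(D_m f) = D_m(D_n f) for every smooth f; and (iii) D_n ω_m = (½ − λ) ω_{n+m}, where ω_m(r,φ) = r^{−λ}e^{imφ}. -/

import Mathlib

set_option linter.unreachableTactic false
set_option linter.unusedTactic false

/-- Partial derivative in the first (radial) variable. -/
noncomputable def pr (f : ℝ × ℝ → ℂ) : ℝ × ℝ → ℂ :=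
  fun p => deriv (fun s : ℝ => f (s, p.2)) p.1

/-- Partial derivative in the second (angular) variable. -/
noncomputable def pphi (f : ℝ × ℝ → ℂ) : ℝ × ℝ → ℂ :=
  fun p => deriv (fun t : ℝ => f (p.1, t)) p.2

/-- The super-rotation operator `L_n = i e^{inφ}(∂_φ - i n r ∂_r)`. -/
noncomputable def Lop (n : ℤ) (f : ℝ × ℝ → ℂ) : ℝ × ℝ → ℂ :=
  fun p => Complex.I * Complex.exp (Complex.I * n * p.2) *
    (pphi f p - Complex.I * n * (p.1 : ℂ) * pr f p)

/-- The super-dilatation operator `D_n = e^{inφ}(r∂_r + ½)`. -/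
noncomputable def Dsop (n : ℤ) (f : ℝ × ℝ → ℂ) : ℝ × ℝ → ℂ :=
  fun p => Complex.exp (Complex.I * n * p.2) * ((p.1 : ℂ) * pr f p + (1 / 2) * f p)

/-- The super-translation function `ω_m(r,φ) = r^{-λ} e^{imφ}`. -/
noncomputable def ω (lam : ℝ) (m : ℤ) : ℝ × ℝ → ℂ :=
  fun p => (p.1 : ℂ) ^ (-(lam : ℂ)) * Complex.exp (Complex.I * m * p.2)

lemma hslice1 {g : ℝ × ℝ → ℂ} {g' : ℝ × ℝ →L[ℝ] ℂ} {p : ℝ × ℝ}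
    (hg : HasFDerivAt g g' p) :
    HasDerivAt (fun s => g (s, p.2)) (g' (1, 0)) p.1 := by
  have hg' : HasFDerivAt g g' (p.1, p.2) := by simpa using hg
  have h1 : HasDerivAt (fun s : ℝ => ((s, p.2) : ℝ × ℝ)) ((1 : ℝ), (0 : ℝ)) p.1 :=
    (hasDerivAt_id p.1).prodMk (hasDerivAt_const _ _)
  exact hg'.comp_hasDerivAt p.1 h1

lemma hslice2 {g : ℝ × ℝ → ℂ} {g' : ℝ × ℝ →L[ℝ] ℂ} {p : ℝ × ℝ}
    (hg : HasFDerivAt g g' p) :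
    HasDerivAt (fun t => g (p.1, t)) (g' (0, 1)) p.2 := by
  have hg' : HasFDerivAt g g' (p.1, p.2) := by simpa using hg
  have h1 : HasDerivAt (fun t : ℝ => ((p.1, t) : ℝ × ℝ)) ((0 : ℝ), (1 : ℝ)) p.2 :=
    (hasDerivAt_const _ _).prodMk (hasDerivAt_id p.2)
  exact hg'.comp_hasDerivAt p.2 h1

lemma hasDerivAt_pr {g : ℝ × ℝ → ℂ} (hg : Differentiable ℝ g) (p : ℝ × ℝ) :
    HasDerivAt (fun s => g (s, p.2)) (pr g p) p.1 := by
  have h := hslice1 (hg p).hasFDerivAt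
  rw [show pr g p = (fderiv ℝ g p) (1, 0) from h.deriv]
  exact h

lemma hasDerivAt_pphi {g : ℝ × ℝ → ℂ} (hg : Differentiable ℝ g) (p : ℝ × ℝ) :
    HasDerivAt (fun t => g (p.1, t)) (pphi g p) p.2 := by
  have h := hslice2 (hg p).hasFDerivAt
  rw [show pphi g p = (fderiv ℝ g p) (0, 1) from h.deriv]
  exact h

lemma pr_eq {f : ℝ × ℝ → ℂ} (hf : ContDiff ℝ (⊤ : ℕ∞) f) :
    pr f = fun q => fderiv ℝ f q (1, 0) :=
  funext fun q => (hslice1 ((hf.differentiable (by simp)) q).hasFDerivAt).deriv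

lemma pphi_eq {f : ℝ × ℝ → ℂ} (hf : ContDiff ℝ (⊤ : ℕ∞) f) :
    pphi f = fun q => fderiv ℝ f q (0, 1) :=
  funext fun q => (hslice2 ((hf.differentiable (by simp)) q).hasFDerivAt).deriv

lemma contDiff_pr {f : ℝ × ℝ → ℂ} (hf : ContDiff ℝ (⊤ : ℕ∞) f) : ContDiff ℝ (⊤ : ℕ∞) (pr f) := by
  rw [pr_eq hf]; exact (hf.fderiv_right (by simp)).clm_apply contDiff_const

lemma contDiff_pphi {f : ℝ × ℝ → ℂ} (hf : ContDiff ℝ (⊤ : ℕ∞) f) : ContDiff ℝ (⊤ : ℕ∞) (pphi f) := by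
  rw [pphi_eq hf]; exact (hf.fderiv_right (by simp)).clm_apply contDiff_const

lemma hasFDerivAt_pr {f : ℝ × ℝ → ℂ} (hf : ContDiff ℝ (⊤ : ℕ∞) f) (p : ℝ × ℝ) :
    HasFDerivAt (pr f)
      ((ContinuousLinearMap.apply ℝ ℂ ((1 : ℝ), (0 : ℝ))).comp
        (fderiv ℝ (fderiv ℝ f) p)) p := by
  rw [pr_eq hf]
  exact (ContinuousLinearMap.apply ℝ ℂ ((1 : ℝ), (0 : ℝ))).hasFDerivAt.comp p
    (((hf.fderiv_right (m := 1) (WithTop.coe_le_coe.mpr le_top)).differentiable one_ne_zero) p).hasFDerivAt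

lemma hasFDerivAt_pphi {f : ℝ × ℝ → ℂ} (hf : ContDiff ℝ (⊤ : ℕ∞) f) (p : ℝ × ℝ) :
    HasFDerivAt (pphi f)
      ((ContinuousLinearMap.apply ℝ ℂ ((0 : ℝ), (1 : ℝ))).comp
        (fderiv ℝ (fderiv ℝ f) p)) p := by
  rw [pphi_eq hf]
  exact (ContinuousLinearMap.apply ℝ ℂ ((0 : ℝ), (1 : ℝ))).hasFDerivAt.comp p
    (((hf.fderiv_right (m := 1) (WithTop.coe_le_coe.mpr le_top)).differentiable one_ne_zero) p).hasFDerivAt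

lemma pphi_pr {f : ℝ × ℝ → ℂ} (hf : ContDiff ℝ (⊤ : ℕ∞) f) (p : ℝ × ℝ) :
    pphi (pr f) p = fderiv ℝ (fderiv ℝ f) p (0, 1) (1, 0) := by
  exact (hslice2 (hasFDerivAt_pr hf p)).deriv

lemma pr_pphi {f : ℝ × ℝ → ℂ} (hf : ContDiff ℝ (⊤ : ℕ∞) f) (p : ℝ × ℝ) :
    pr (pphi f) p = fderiv ℝ (fderiv ℝ f) p (0, 1) (1, 0) := by
  have h : pr (pphi f) p = fderiv ℝ (fderiv ℝ f) p (1, 0) (0, 1) := by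
    exact (hslice1 (hasFDerivAt_pphi hf p)).deriv
  rw [h]
  exact second_derivative_symmetric (fun y => ((hf.differentiable (by simp)) y).hasFDerivAt)
    (((hf.fderiv_right (m := 1) (WithTop.coe_le_coe.mpr le_top)).differentiable one_ne_zero p).hasFDerivAt) _ _

lemma mixed_symm {f : ℝ × ℝ → ℂ} (hf : ContDiff ℝ (⊤ : ℕ∞) f) (p : ℝ × ℝ) :
    pr (pphi f) p = pphi (pr f) p := by
  rw [pr_pphi hf p, pphi_pr hf p]

lemma pr_Dsop {f : ℝ × ℝ → ℂ} (hf : ContDiff ℝ (⊤ : ℕ∞) f) (m : ℤ) (p : ℝ × ℝ) :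
    pr (Dsop m f) p = Complex.exp (Complex.I * m * p.2) *
      ((3 / 2 : ℂ) * pr f p + (p.1 : ℂ) * pr (pr f) p) := by
  have hfd : Differentiable ℝ f := hf.differentiable (by simp)
  have hprd : Differentiable ℝ (pr f) := (contDiff_pr hf).differentiable (by simp)
  have hs : HasDerivAt (fun s : ℝ => (s : ℂ)) 1 p.1 := by
    exact Complex.ofRealCLM.hasDerivAt (x := p.1)
  have h1 := hs.mul (hasDerivAt_pr hprd p)
  have h2 := (hasDerivAt_pr hfd p).const_mul ((1 : ℂ) / 2)
  have h3 := (h1.add h2).const_mul (Complex.exp (Complex.I * m * p.2))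
  have h4 := (show HasDerivAt (fun s => Dsop m f (s, p.2)) _ p.1 from h3).deriv
  show deriv (fun s => Dsop m f (s, p.2)) p.1 = _
  rw [h4]
  all_goals (simp only [Prod.mk.eta]; ring)

lemma pphi_Dsop {f : ℝ × ℝ → ℂ} (hf : ContDiff ℝ (⊤ : ℕ∞) f) (m : ℤ) (p : ℝ × ℝ) :
    pphi (Dsop m f) p = Complex.I * m * Complex.exp (Complex.I * m * p.2) *
        ((p.1 : ℂ) * pr f p + (1 / 2 : ℂ) * f p) +
      Complex.exp (Complex.I * m * p.2) *
        ((p.1 : ℂ) * pphi (pr f) p + (1 / 2 : ℂ) * pphi f p) := by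
  have hfd : Differentiable ℝ f := hf.differentiable (by simp)
  have hprd : Differentiable ℝ (pr f) := (contDiff_pr hf).differentiable (by simp)
  have hlin : HasDerivAt (fun t : ℝ => Complex.I * m * (t : ℂ)) (Complex.I * m) p.2 := by
    simpa using (Complex.ofRealCLM.hasDerivAt (x := p.2)).const_mul (Complex.I * (m : ℂ))
  have hE : HasDerivAt (fun t : ℝ => Complex.exp (Complex.I * m * (t : ℂ)))
      (Complex.I * m * Complex.exp (Complex.I * m * p.2)) p.2 := by
    simpa [mul_comm] using hlin.cexp
  have hA := ((hasDerivAt_pphi hprd p).const_mul ((p.1 : ℂ))).add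
    ((hasDerivAt_pphi hfd p).const_mul ((1 : ℂ) / 2))
  have h := hE.mul hA
  have h4 := (show HasDerivAt (fun t => Dsop m f (p.1, t)) _ p.2 from h).deriv
  show deriv (fun t => Dsop m f (p.1, t)) p.2 = _
  rw [h4]
  all_goals (simp only [Pi.add_apply, Prod.mk.eta])

lemma pr_Lop {f : ℝ × ℝ → ℂ} (hf : ContDiff ℝ (⊤ : ℕ∞) f) (n : ℤ) (p : ℝ × ℝ) :
    pr (Lop n f) p = Complex.I * Complex.exp (Complex.I * n * p.2) *
      (pr (pphi f) p - Complex.I * n * (pr f p + (p.1 : ℂ) * pr (pr f) p)) := by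
  have hprd : Differentiable ℝ (pr f) := (contDiff_pr hf).differentiable (by simp)
  have hppd : Differentiable ℝ (pphi f) := (contDiff_pphi hf).differentiable (by simp)
  have hs : HasDerivAt (fun s : ℝ => (s : ℂ)) 1 p.1 := by
    exact Complex.ofRealCLM.hasDerivAt (x := p.1)
  have h1 := (hs.const_mul (Complex.I * (n : ℂ))).mul (hasDerivAt_pr hprd p)
  have h2 := (hasDerivAt_pr hppd p).sub h1
  have h3 := h2.const_mul (Complex.I * Complex.exp (Complex.I * n * p.2))
  have h4 := (show HasDerivAt (fun s => Lop n f (s, p.2)) _ p.1 from h3).deriv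
  show deriv (fun s => Lop n f (s, p.2)) p.1 = _
  rw [h4]
  all_goals (simp only [Prod.mk.eta]; ring)

lemma pr_omega (lam : ℝ) (m : ℤ) (p : ℝ × ℝ) (hp : 0 < p.1) :
    pr (ω lam m) p =
      ((-lam * p.1 ^ (-lam - 1) : ℝ) : ℂ) * Complex.exp (Complex.I * m * p.2) := by
  have h1 : HasDerivAt (fun s : ℝ => s ^ (-lam)) (-lam * p.1 ^ (-lam - 1)) p.1 :=
    Real.hasDerivAt_rpow_const (Or.inl hp.ne')
  have h2 := h1.ofReal_comp
  have hev : (fun s : ℝ => ((s ^ (-lam) : ℝ) : ℂ)) =ᶠ[nhds p.1]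
      (fun s : ℝ => (s : ℂ) ^ (-(lam : ℂ))) := by
    filter_upwards [eventually_gt_nhds hp] with s hs
    rw [← Complex.ofReal_neg]
    exact Complex.ofReal_cpow hs.le (-lam)
  have h3 : HasDerivAt (fun s : ℝ => (s : ℂ) ^ (-(lam : ℂ)))
      (((-lam * p.1 ^ (-lam - 1) : ℝ)) : ℂ) p.1 := h2.congr_of_eventuallyEq hev.symm
  have h4 := h3.mul_const (Complex.exp (Complex.I * m * p.2))
  exact (show HasDerivAt (fun s => ω lam m (s, p.2)) _ p.1 from h4).deriv

/-- Fix `λ ∈ ℝ`.  For all `n, m ∈ ℤ`: (i) `[L_n, D_m] = -m D_{n+m}` on smooth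
functions; (ii) the super-dilatations commute on smooth functions; and
(iii) `D_n ω_m = (½ - λ) ω_{n+m}` on the half-plane. -/
theorem super_dilatation_relations (lam : ℝ) (n m : ℤ) :
    (∀ f : ℝ × ℝ → ℂ, ContDiff ℝ (⊤ : ℕ∞) f → ∀ p : ℝ × ℝ, 0 < p.1 →
        Lop n (Dsop m f) p - Dsop m (Lop n f) p = -(m : ℂ) * Dsop (n + m) f p) ∧
    (∀ f : ℝ × ℝ → ℂ, ContDiff ℝ (⊤ : ℕ∞) f → ∀ p : ℝ × ℝ, 0 < p.1 →
        Dsop n (Dsop m f) p = Dsop m (Dsop n f) p) ∧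
    (∀ p : ℝ × ℝ, 0 < p.1 →
        Dsop n (ω lam m) p = ((1 / 2 : ℂ) - (lam : ℂ)) * ω lam (n + m) p) := by
  refine ⟨?_, ?_, ?_⟩
  · intro f hf p _
    have hE : Complex.exp (Complex.I * ((n + m : ℤ) : ℂ) * p.2) =
        Complex.exp (Complex.I * n * p.2) * Complex.exp (Complex.I * m * p.2) := by
      rw [← Complex.exp_add]; congr 1; push_cast; ring
    have e1 : Lop n (Dsop m f) p = Complex.I * Complex.exp (Complex.I * n * p.2) *
        (pphi (Dsop m f) p - Complex.I * n * (p.1 : ℂ) * pr (Dsop m f) p) := rfl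
    have e2 : Dsop m (Lop n f) p = Complex.exp (Complex.I * m * p.2) *
        ((p.1 : ℂ) * pr (Lop n f) p + (1 / 2) * Lop n f p) := rfl
    have e3 : Dsop (n + m) f p = Complex.exp (Complex.I * ((n + m : ℤ) : ℂ) * p.2) *
        ((p.1 : ℂ) * pr f p + (1 / 2) * f p) := rfl
    have e4 : Lop n f p = Complex.I * Complex.exp (Complex.I * n * p.2) *
        (pphi f p - Complex.I * n * (p.1 : ℂ) * pr f p) := rfl
    rw [e1, e2, e3, e4, pr_Dsop hf m p, pphi_Dsop hf m p, pr_Lop hf n p,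
      mixed_symm hf p, hE]
    ring_nf
    simp only [Complex.I_sq]
    ring
  · intro f hf p _
    have e1 : Dsop n (Dsop m f) p = Complex.exp (Complex.I * n * p.2) *
        ((p.1 : ℂ) * pr (Dsop m f) p + (1 / 2) * Dsop m f p) := rfl
    have e2 : Dsop m (Dsop n f) p = Complex.exp (Complex.I * m * p.2) *
        ((p.1 : ℂ) * pr (Dsop n f) p + (1 / 2) * Dsop n f p) := rfl
    have e3 : Dsop m f p = Complex.exp (Complex.I * m * p.2) *
        ((p.1 : ℂ) * pr f p + (1 / 2) * f p) := rfl
    have e4 : Dsop n f p = Complex.exp (Complex.I * n * p.2) *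
        ((p.1 : ℂ) * pr f p + (1 / 2) * f p) := rfl
    rw [e1, e2, pr_Dsop hf m p, pr_Dsop hf n p, e3, e4]
    ring
  · intro p hp
    have hE : Complex.exp (Complex.I * ((n + m : ℤ) : ℂ) * p.2) =
        Complex.exp (Complex.I * n * p.2) * Complex.exp (Complex.I * m * p.2) := by
      rw [← Complex.exp_add]; congr 1; push_cast; ring
    have e1 : Dsop n (ω lam m) p = Complex.exp (Complex.I * n * p.2) *
        ((p.1 : ℂ) * pr (ω lam m) p + (1 / 2) * ω lam m p) := rfl
    have e2 : ω lam m p = (p.1 : ℂ) ^ (-(lam : ℂ)) *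
        Complex.exp (Complex.I * m * p.2) := rfl
    have e3 : ω lam (n + m) p = (p.1 : ℂ) ^ (-(lam : ℂ)) *
        Complex.exp (Complex.I * ((n + m : ℤ) : ℂ) * p.2) := rfl
    have hcp : (p.1 : ℂ) ^ (-(lam : ℂ)) = ((p.1 ^ (-lam) : ℝ) : ℂ) := by
      rw [← Complex.ofReal_neg]
      exact (Complex.ofReal_cpow hp.le (-lam)).symm
    have hrr : (p.1 ^ (-lam) : ℝ) = p.1 ^ (-lam - 1) * p.1 := by
      rw [← Real.rpow_add_one hp.ne' (-lam - 1)]; ring_nf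
    rw [e1, e2, e3, pr_omega lam m p hp, hE, hcp, hrr]
    push_cast
    ring
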